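/- arXiv:1707.03083 — 2 statements merged into one kernel-verified Lean document; each statement's English description precedes it below -/
import Mathlib

section
/- Efron–Stein inequality: let X₁,…,Xₙ, X₁′,…,Xₙ′ be independent random variables taking values in a space S, with Xᵢ′ distributed identically to Xᵢ, and let f : Sⁿ → ℝ be measurable with f(X₁,…,Xₙ) square-integrable. Then Var[f(X₁,…,Xₙ)] ≤ (1/2)·Σᵢ₌₁ⁿ E[(f(X₁,…,Xₙ) − f(X₁,…,Xᵢ′,…,Xₙ))²]. -/
open MeasureTheory ProbabilityTheory

/-! If `x'` is an independent copy of `x`, then `Var f = 𝔼[f(x) (f(x) - f(x'))]`. Telescope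
`f(x) - f(x')` through the hybrid points whose first `i` coordinates come from `x'`: the `i`-th
increment is the resampling difference `Dᵢ` evaluated at a point obtained by exchanging
coordinates between `x` and `x'`. Exchanging `xᵢ` with `x'ᵢ` preserves the joint law and flips
the sign of that increment while turning `f(x)` into `f(x) - Dᵢ`, so the correlation of the
increment with `f(x)` is half its correlation with `Dᵢ`; by AM-GM and the invariance of the law
under exchanges this is at most `𝔼[Dᵢ²] / 2`. -/

lemma MeasureTheory.MeasurePreserving.integral_comp_of_aestronglyMeasurable
    {α β E : Type*} [MeasurableSpace α] [MeasurableSpace β] [NormedAddCommGroup E]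
    [NormedSpace ℝ E] {μ : Measure α} {ν : Measure β} {T : α → β}
    (hT : MeasurePreserving T μ ν) {g : β → E} (hg : AEStronglyMeasurable g ν) :
    ∫ x, g (T x) ∂μ = ∫ y, g y ∂ν := by
  rw [← hT.map_eq] at hg ⊢
  exact (integral_map hT.aemeasurable hg).symm

lemma integral_mul_eq_half_integral_sub_mul {Ω : Type*} [MeasurableSpace Ω] {P : Measure Ω}
    {s : Ω → Ω} (hs : MeasurePreserving s P P) {F G : Ω → ℝ}
    (hFG : Integrable (fun x => F x * G x) P) (hG : ∀ x, G (s x) = -G x) :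
    ∫ x, F x * G x ∂P = (1 / 2) * ∫ x, (F x - F (s x)) * G x ∂P := by
  have hswap : ∀ x, F (s x) * G x = -(F (s x) * G (s x)) := fun x => by rw [hG]; ring
  have hint : Integrable (fun x => F (s x) * G x) P := by
    simp_rw [hswap]
    exact (hs.integrable_comp_of_integrable hFG).neg
  have hanti : ∫ x, F (s x) * G x ∂P = -∫ x, F x * G x ∂P := by
    simp_rw [hswap, integral_neg]
    rw [hs.integral_comp_of_aestronglyMeasurable hFG.aestronglyMeasurable]
  simp_rw [sub_mul]
  rw [integral_sub hFG hint, hanti]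
  ring

lemma integral_mul_le_half_integral_add_sq {Ω : Type*} [MeasurableSpace Ω] {P : Measure Ω}
    {F G : Ω → ℝ} (hF : MemLp F 2 P) (hG : MemLp G 2 P) :
    ∫ x, F x * G x ∂P ≤ (1 / 2) * (∫ x, F x ^ 2 ∂P + ∫ x, G x ^ 2 ∂P) := by
  rw [← integral_add hF.integrable_sq hG.integrable_sq, ← integral_const_mul]
  refine integral_mono (hF.integrable_mul hG)
    ((hF.integrable_sq.add hG.integrable_sq).const_mul _) fun x => ?_
  nlinarith [two_mul_le_add_sq (F x) (G x)]

lemma variance_eq_integral_mul_sub_prod {Ω : Type*} [MeasurableSpace Ω] {μ : Measure Ω}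
    [IsProbabilityMeasure μ] {f : Ω → ℝ} (hf : MemLp f 2 μ) :
    variance f μ = ∫ p, f p.1 * (f p.1 - f p.2) ∂(μ.prod μ) := by
  have h₁ : MemLp (fun p : Ω × Ω => f p.1) 2 (μ.prod μ) :=
    hf.comp_measurePreserving measurePreserving_fst
  have h₂ : MemLp (fun p : Ω × Ω => f p.2) 2 (μ.prod μ) :=
    hf.comp_measurePreserving measurePreserving_snd
  have h₁₁ : Integrable (fun p : Ω × Ω => f p.1 * f p.1) (μ.prod μ) := h₁.integrable_mul h₁
  have h₁₂ : Integrable (fun p : Ω × Ω => f p.1 * f p.2) (μ.prod μ) := h₁.integrable_mul h₂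
  simp_rw [mul_sub]
  rw [integral_sub h₁₁ h₁₂, integral_prod_mul,
    measurePreserving_fst.integral_comp_of_aestronglyMeasurable (g := fun x => f x * f x)
      (hf.aestronglyMeasurable.mul hf.aestronglyMeasurable),
    variance_eq_sub hf]
  simp only [Pi.pow_apply, sq]

section SwapOn

variable {ι S : Type*} [DecidableEq ι]

def swapOn (T : Finset ι) (p : (ι → S) × (ι → S)) : (ι → S) × (ι → S) :=
  (T.piecewise p.2 p.1, T.piecewise p.1 p.2)

lemma swapOn_swapOn (T U : Finset ι) (p : (ι → S) × (ι → S)) :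
    swapOn T (swapOn U p) = swapOn (symmDiff T U) p := by
  ext j <;> by_cases hT : j ∈ T <;> by_cases hU : j ∈ U <;>
    simp [swapOn, Finset.piecewise, Finset.mem_symmDiff, hT, hU]

@[simp]
lemma swapOn_empty (p : (ι → S) × (ι → S)) : swapOn ∅ p = p := by
  simp [swapOn]

lemma swapOn_comm (T U : Finset ι) (p : (ι → S) × (ι → S)) :
    swapOn T (swapOn U p) = swapOn U (swapOn T p) := by
  rw [swapOn_swapOn, swapOn_swapOn, symmDiff_comm]

@[simp]
lemma swapOn_swapOn_self (T : Finset ι) (p : (ι → S) × (ι → S)) :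
    swapOn T (swapOn T p) = p := by
  rw [swapOn_swapOn, symmDiff_self, Finset.bot_eq_empty, swapOn_empty]

@[simp]
lemma swapOn_univ_fst [Fintype ι] (p : (ι → S) × (ι → S)) :
    (swapOn Finset.univ p).1 = p.2 := by
  simp [swapOn]

@[simp]
lemma swapOn_singleton_fst (i : ι) (p : (ι → S) × (ι → S)) :
    (swapOn {i} p).1 = Function.update p.1 i (p.2 i) :=
  Finset.piecewise_singleton _ _ _

def resampleDiff (f : (ι → S) → ℝ) (i : ι) (p : (ι → S) × (ι → S)) : ℝ :=
  f p.1 - f (swapOn {i} p).1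

lemma resampleDiff_swapOn_singleton (f : (ι → S) → ℝ) (i : ι) (p : (ι → S) × (ι → S)) :
    resampleDiff f i (swapOn {i} p) = -resampleDiff f i p := by
  rw [resampleDiff, resampleDiff, swapOn_swapOn_self]
  ring

variable [Fintype ι] [MeasurableSpace S] (ν : ι → Measure S)

lemma measurePreserving_swapOn [∀ i, SigmaFinite (ν i)] (T : Finset ι) :
    MeasurePreserving (swapOn T) ((Measure.pi ν).prod (Measure.pi ν))
      ((Measure.pi ν).prod (Measure.pi ν)) := by
  have he := measurePreserving_arrowProdEquivProdArrow S S ι ν ν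
  have hswap : ∀ i, MeasurePreserving (if i ∈ T then Prod.swap else id)
      ((ν i).prod (ν i)) ((ν i).prod (ν i)) := fun i => by
    split_ifs
    exacts [Measure.measurePreserving_swap, MeasurePreserving.id _]
  convert he.comp ((measurePreserving_pi _ _ hswap).comp he.symm) using 1
  ext p j <;> by_cases hj : j ∈ T <;>
    simp [swapOn, hj, MeasurableEquiv.arrowProdEquivProdArrow, Equiv.arrowProdEquivProdArrow]

variable [∀ i, IsProbabilityMeasure (ν i)] {f : (ι → S) → ℝ}

lemma memLp_comp_fst_swapOn (hf : MemLp f 2 (Measure.pi ν)) (T : Finset ι) :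
    MemLp (fun p => f (swapOn T p).1) 2 ((Measure.pi ν).prod (Measure.pi ν)) :=
  hf.comp_measurePreserving (measurePreserving_fst.comp (measurePreserving_swapOn ν T))

lemma memLp_resampleDiff (hf : MemLp f 2 (Measure.pi ν)) (i : ι) :
    MemLp (resampleDiff f i) 2 ((Measure.pi ν).prod (Measure.pi ν)) :=
  (hf.comp_measurePreserving measurePreserving_fst).sub (memLp_comp_fst_swapOn ν hf {i})

lemma integral_mul_resampleDiff_swapOn_le (hf : MemLp f 2 (Measure.pi ν)) (i : ι)
    (T : Finset ι) :
    ∫ p, f p.1 * resampleDiff f i (swapOn T p) ∂(Measure.pi ν).prod (Measure.pi ν)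
      ≤ (1 / 2) * ∫ p, resampleDiff f i p ^ 2 ∂(Measure.pi ν).prod (Measure.pi ν) := by
  have hD := memLp_resampleDiff ν hf i
  have hG : MemLp (fun p => resampleDiff f i (swapOn T p)) 2
      ((Measure.pi ν).prod (Measure.pi ν)) :=
    hD.comp_measurePreserving (measurePreserving_swapOn ν T)
  have hF : MemLp (fun p => f p.1) 2 ((Measure.pi ν).prod (Measure.pi ν)) :=
    hf.comp_measurePreserving measurePreserving_fst
  have hanti : ∀ p,
      resampleDiff f i (swapOn T (swapOn {i} p)) = -resampleDiff f i (swapOn T p) := fun p => by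
    rw [swapOn_comm, resampleDiff_swapOn_singleton]
  have hGsq : ∫ p, resampleDiff f i (swapOn T p) ^ 2 ∂(Measure.pi ν).prod (Measure.pi ν)
      = ∫ p, resampleDiff f i p ^ 2 ∂(Measure.pi ν).prod (Measure.pi ν) :=
    (measurePreserving_swapOn ν T).integral_comp_of_aestronglyMeasurable
      (g := fun p => resampleDiff f i p ^ 2) (hD.aestronglyMeasurable.pow 2)
  calc ∫ p, f p.1 * resampleDiff f i (swapOn T p) ∂(Measure.pi ν).prod (Measure.pi ν)
      = (1 / 2) * ∫ p, resampleDiff f i p * resampleDiff f i (swapOn T p)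
          ∂(Measure.pi ν).prod (Measure.pi ν) :=
        integral_mul_eq_half_integral_sub_mul (measurePreserving_swapOn ν {i})
          (hF.integrable_mul hG) hanti
    _ ≤ (1 / 2) * ((1 / 2) *
          (∫ p, resampleDiff f i p ^ 2 ∂(Measure.pi ν).prod (Measure.pi ν)
            + ∫ p, resampleDiff f i (swapOn T p) ^ 2 ∂(Measure.pi ν).prod (Measure.pi ν))) := by
        gcongr
        exact integral_mul_le_half_integral_add_sq hD hG
    _ = (1 / 2) * ∫ p, resampleDiff f i p ^ 2 ∂(Measure.pi ν).prod (Measure.pi ν) := by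
        rw [hGsq]
        ring

end SwapOn

lemma sub_eq_sum_resampleDiff_swapOn {S : Type*} {n : ℕ} (f : (Fin n → S) → ℝ)
    (p : (Fin n → S) × (Fin n → S)) :
    f p.1 - f p.2 = ∑ i : Fin n, resampleDiff f i (swapOn (Finset.Iio i) p) := by
  let g : ℕ → ℝ := fun k => f (swapOn (Finset.univ.filter fun j : Fin n => (j : ℕ) < k) p).1
  have hstep : ∀ i : Fin n, resampleDiff f i (swapOn (Finset.Iio i) p) = g i - g (i + 1) := by
    intro i
    have hIio : Finset.Iio i = Finset.univ.filter fun j : Fin n => (j : ℕ) < i := by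
      ext j
      simp
    have hsucc : symmDiff {i} (Finset.Iio i)
        = Finset.univ.filter fun j : Fin n => (j : ℕ) < i + 1 := by
      ext j
      simp only [Finset.mem_symmDiff, Finset.mem_singleton, Finset.mem_Iio, Finset.mem_filter,
        Finset.mem_univ, true_and, Fin.lt_def, Fin.ext_iff]
      omega
    rw [resampleDiff, swapOn_swapOn, hsucc, hIio]
  have h₀ : g 0 = f p.1 := by simp [g]
  have hn : g n = f p.2 := by simp [g]
  rw [Finset.sum_congr rfl fun i _ => hstep i,
    Fin.sum_univ_eq_sum_range (fun k => g k - g (k + 1)), Finset.sum_range_sub', h₀, hn]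

theorem variance_pi_le_half_sum_integral_resampleDiff_sq {S : Type*} [MeasurableSpace S]
    {n : ℕ} (ν : Fin n → Measure S) [∀ i, IsProbabilityMeasure (ν i)] {f : (Fin n → S) → ℝ}
    (hf : MemLp f 2 (Measure.pi ν)) :
    variance f (Measure.pi ν)
      ≤ (1 / 2) * ∑ i, ∫ p, resampleDiff f i p ^ 2 ∂(Measure.pi ν).prod (Measure.pi ν) := by
  have hF : MemLp (fun p => f p.1) 2 ((Measure.pi ν).prod (Measure.pi ν)) :=
    hf.comp_measurePreserving measurePreserving_fst
  rw [variance_eq_integral_mul_sub_prod hf]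
  simp_rw [sub_eq_sum_resampleDiff_swapOn f, Finset.mul_sum]
  have hint : ∀ i : Fin n,
      Integrable (fun p => f p.1 * resampleDiff f i (swapOn (Finset.Iio i) p))
        ((Measure.pi ν).prod (Measure.pi ν)) := fun i =>
    hF.integrable_mul
      ((memLp_resampleDiff ν hf i).comp_measurePreserving (measurePreserving_swapOn ν _))
  rw [integral_finsetSum _ fun i _ => hint i]
  exact Finset.sum_le_sum fun i _ => integral_mul_resampleDiff_swapOn_le ν hf i _

lemma measurePreserving_prodMk_of_iIndepFun_sumElim {Ω S ι : Type*} [MeasurableSpace Ω]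
    [MeasurableSpace S] [Fintype ι] {μ : Measure Ω} [IsProbabilityMeasure μ] {X X' : ι → Ω → S}
    (hX : ∀ i, Measurable (X i)) (hX' : ∀ i, Measurable (X' i))
    (hindep : iIndepFun (Sum.elim X X') μ) (hid : ∀ i, μ.map (X' i) = μ.map (X i)) :
    MeasurePreserving (fun ω => (fun i => X i ω, fun i => X' i ω)) μ
      ((Measure.pi fun i => μ.map (X i)).prod (Measure.pi fun i => μ.map (X i))) := by
  have hZ : ∀ k, Measurable (Sum.elim X X' k) := by
    rintro (i | i)
    exacts [hX i, hX' i]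
  have hlaw : MeasurePreserving (fun ω k => Sum.elim X X' k ω) μ
      (Measure.pi fun k => μ.map (Sum.elim X X' k)) :=
    ⟨measurable_pi_lambda _ hZ, hindep.map_fun_eq_pi_map fun k => (hZ k).aemeasurable⟩
  have h := (measurePreserving_sumPiEquivProdPi _).comp hlaw
  simp only [Sum.elim_inl, Sum.elim_inr, hid] at h
  exact h

theorem efron_stein_general {Ω S : Type*} [MeasurableSpace Ω] [MeasurableSpace S]
    {μ : Measure Ω} [IsProbabilityMeasure μ] (n : ℕ)
    (X X' : Fin n → Ω → S)
    (hmeas : ∀ i, Measurable (X i)) (hmeas' : ∀ i, Measurable (X' i))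
    (hindep : iIndepFun
      (Sum.elim X X' : Fin n ⊕ Fin n → Ω → S) μ)
    (hid : ∀ i, Measure.map (X' i) μ = Measure.map (X i) μ)
    (f : (Fin n → S) → ℝ) (hfmeas : Measurable f)
    (hL2 : MemLp (fun ω => f (fun i => X i ω)) 2 μ) :
    variance (fun ω => f (fun i => X i ω)) μ
      ≤ (1 / 2) * ∑ i : Fin n,
          ∫ ω, (f (fun j => X j ω) - f (Function.update (fun j => X j ω) i (X' i ω))) ^ 2 ∂μ := by
  have hpair := measurePreserving_prodMk_of_iIndepFun_sumElim hmeas hmeas' hindep hid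
  have : ∀ i, IsProbabilityMeasure (μ.map (X i)) := fun i =>
    Measure.isProbabilityMeasure_map (hmeas i).aemeasurable
  have hX : MeasurePreserving (fun ω i => X i ω) μ (Measure.pi fun i => μ.map (X i)) :=
    measurePreserving_fst.comp hpair
  have hf : MemLp f 2 (Measure.pi fun i => μ.map (X i)) := by
    rw [← hX.map_eq]
    exact (memLp_map_measure_iff hfmeas.aestronglyMeasurable hX.aemeasurable).2 hL2
  rw [hX.variance_fun_comp hfmeas.aemeasurable]
  refine (variance_pi_le_half_sum_integral_resampleDiff_sq _ hf).trans_eq ?_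
  congr 1
  refine Finset.sum_congr rfl fun i _ => ?_
  rw [← hpair.integral_comp_of_aestronglyMeasurable (g := fun p => resampleDiff f i p ^ 2)
    ((memLp_resampleDiff _ hf i).aestronglyMeasurable.pow 2)]
  simp only [resampleDiff, swapOn_singleton_fst]

theorem efron_stein {Ω S : Type*} [MeasurableSpace Ω] [MeasurableSpace S]
    {μ : Measure Ω} [IsProbabilityMeasure μ] (n : ℕ)
    (X X' : Fin n → Ω → S)
    (hmeas : ∀ i, Measurable (X i)) (hmeas' : ∀ i, Measurable (X' i))
    (hindep : iIndepFun
      (Sum.elim X X' : Fin n ⊕ Fin n → Ω → S) μ)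
    (hid : ∀ i, Measure.map (X' i) μ = Measure.map (X i) μ)
    (f : (Fin n → S) → ℝ) (hfmeas : Measurable f)
    (hL2 : MemLp (fun ω => f (fun i => X i ω)) 2 μ)
    (hL2' : ∀ i, MemLp (fun ω => f (Function.update (fun j => X j ω) i (X' i ω))) 2 μ) :
    variance (fun ω => f (fun i => X i ω)) μ
      ≤ (1 / 2) * ∑ i : Fin n,
          ∫ ω, (f (fun j => X j ω) - f (Function.update (fun j => X j ω) i (X' i ω))) ^ 2 ∂μ :=
  efron_stein_general n X X' hmeas hmeas' hindep hid f hfmeas hL2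
end

section
/- Let d be odd and q, t ≥ 1 be integers. Suppose I(x₁, h) = Σ_{m=0}^{q} Σ_{ℓ=0}^{d+q} p_{m,ℓ}(x₁)·(√(1 − ((1−x₁)/h)²))^ℓ·((1−x₁)/h)^m where each coefficient p_{m,ℓ} is r−q times continuously differentiable on [1−h, 1]. Then I(x₁,h)^t has the same form with q replaced by qt, d+q replaced by (d+q)t, and coefficients that are still r−q times continuously differentiable; moreover ∫_{1−h}^{1} I(x₁,h)^t dx₁ = Σ_{i=1}^{r−q} e_i h^i + o(h^{r−q}) as h → 0 for suitable constants e_i. -/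
/-!
Expanding the `t`-th power of a bivariate polynomial in `√(1 - u²)` and `u = (1 - x) / h` gives a
polynomial of the same kind whose coefficients are sums of products of the `p m ℓ`. For the
integral it then suffices to treat one term `∫_{1-h}^1 P x · Q ((1 - x) / h) dx`. The
substitution `x = 1 - h y` turns it into `h ∫_0^1 P (1 - h y) Q y dy`; replacing `s ↦ P (1 - s)`
by its Taylor polynomial of degree `n` at `0` gives a polynomial in `h` whose coefficients are
moments of `Q`, and the Taylor remainder `o(sⁿ)` becomes `o(hⁿ)` uniformly in `y ∈ [0, 1]`.
The extra factor `h` makes the error `o(hⁿ⁺¹)`, and the top term is dropped.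
-/

open Filter Set MeasureTheory Asymptotics Topology

section PowCoeff

variable {R : Type*} [CommSemiring R]

/-- The coefficient of `a ^ ℓ * b ^ m` in `(∑_{m ≤ M, ℓ ≤ L} c m ℓ * a ^ ℓ * b ^ m) ^ t`,
obtained by choosing one summand `(f i).1, (f i).2` in each of the `t` factors. -/
def powCoeff (c : ℕ → ℕ → R) (M L t m ℓ : ℕ) : R :=
  ∑ f ∈ Fintype.piFinset (fun _ : Fin t ↦ Finset.range (M + 1) ×ˢ Finset.range (L + 1))
      with (∑ i, (f i).1, ∑ i, (f i).2) = (m, ℓ),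
    ∏ i, c (f i).1 (f i).2

theorem bivariate_sum_pow_eq_sum_powCoeff (c : ℕ → ℕ → R) (M L t : ℕ) (a b : R) :
    (∑ m ∈ Finset.range (M + 1), ∑ ℓ ∈ Finset.range (L + 1), c m ℓ * a ^ ℓ * b ^ m) ^ t
      = ∑ m ∈ Finset.range (M * t + 1), ∑ ℓ ∈ Finset.range (L * t + 1),
          powCoeff c M L t m ℓ * a ^ ℓ * b ^ m := by
  set S := Finset.range (M + 1) ×ˢ Finset.range (L + 1)
  have hmaps : ∀ f ∈ Fintype.piFinset (fun _ : Fin t ↦ S), (∑ i, (f i).1, ∑ i, (f i).2)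
      ∈ Finset.range (M * t + 1) ×ˢ Finset.range (L * t + 1) := by
    intro f hf
    have hbound := fun i ↦ Finset.mem_product.1 (Fintype.mem_piFinset.1 hf i)
    simp only [Finset.mem_product, Finset.mem_range, Nat.lt_succ_iff] at hbound ⊢
    constructor
    · simpa [mul_comm] using Finset.sum_le_card_nsmul Finset.univ _ M fun i _ ↦ (hbound i).1
    · simpa [mul_comm] using Finset.sum_le_card_nsmul Finset.univ _ L fun i _ ↦ (hbound i).2
  calc (∑ m ∈ Finset.range (M + 1), ∑ ℓ ∈ Finset.range (L + 1), c m ℓ * a ^ ℓ * b ^ m) ^ t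
      = ∏ _i : Fin t, ∑ z ∈ S, c z.1 z.2 * a ^ z.2 * b ^ z.1 := by
        rw [Finset.prod_const, Finset.card_univ, Fintype.card_fin, Finset.sum_product]
    _ = ∑ f ∈ Fintype.piFinset (fun _ : Fin t ↦ S),
          (∏ i, c (f i).1 (f i).2) * a ^ (∑ i, (f i).2) * b ^ (∑ i, (f i).1) := by
        rw [Finset.prod_univ_sum]
        simp only [Finset.prod_mul_distrib, Finset.prod_pow_eq_pow_sum]
    _ = _ := by
        rw [← Finset.sum_fiberwise_of_maps_to hmaps, Finset.sum_product]
        refine Finset.sum_congr rfl fun m _ ↦ Finset.sum_congr rfl fun ℓ _ ↦ ?_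
        rw [powCoeff, Finset.sum_mul, Finset.sum_mul]
        refine Finset.sum_congr rfl fun f hf ↦ ?_
        obtain ⟨hm, hℓ⟩ := Prod.mk.inj (Finset.mem_filter.1 hf).2
        rw [hm, hℓ]

end PowCoeff

theorem contDiffOn_powCoeff {E : Type*} [NormedAddCommGroup E] [NormedSpace ℝ E]
    {c : ℕ → ℕ → E → ℝ} {n : WithTop ℕ∞} {s : Set E} (hc : ∀ m ℓ, ContDiffOn ℝ n (c m ℓ) s)
    (M L t m ℓ : ℕ) : ContDiffOn ℝ n (fun x ↦ powCoeff (fun m ℓ ↦ c m ℓ x) M L t m ℓ) s :=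
  ContDiffOn.sum fun _ _ ↦ contDiffOn_prod fun _ _ ↦ hc _ _

def HasBoundaryExpansion (F : ℝ → ℝ) (n : ℕ) : Prop :=
  ∃ e : ℕ → ℝ, (fun h ↦ F h - ∑ i ∈ Finset.Icc 1 n, e i * h ^ i) =o[𝓝[>] 0] fun h ↦ h ^ n

namespace HasBoundaryExpansion

variable {F G : ℝ → ℝ} {n : ℕ}

theorem congr' (hF : HasBoundaryExpansion F n) (hFG : F =ᶠ[𝓝[>] 0] G) :
    HasBoundaryExpansion G n := by
  obtain ⟨e, he⟩ := hF
  exact ⟨e, he.congr' (hFG.sub .rfl) .rfl⟩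

theorem sum {ι : Type*} {s : Finset ι} {F : ι → ℝ → ℝ}
    (hF : ∀ k ∈ s, HasBoundaryExpansion (F k) n) :
    HasBoundaryExpansion (fun h ↦ ∑ k ∈ s, F k h) n := by
  choose! e he using hF
  refine ⟨fun i ↦ ∑ k ∈ s, e k i, (IsLittleO.fun_sum he).congr_left fun h ↦ ?_⟩
  simp only [Finset.sum_mul, Finset.sum_sub_distrib]
  rw [Finset.sum_comm]

theorem of_succ (hF : HasBoundaryExpansion F (n + 1)) : HasBoundaryExpansion F n := by
  obtain ⟨e, he⟩ := hF
  have hpow : (fun h : ℝ ↦ h ^ (n + 1)) =o[𝓝[>] 0] fun h ↦ h ^ n :=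
    (isLittleO_pow_pow n.lt_succ_self).mono nhdsWithin_le_nhds
  refine ⟨e, (he.trans hpow).add (hpow.const_mul_left (e (n + 1))) |>.congr_left fun h ↦ ?_⟩
  rw [Finset.sum_Icc_succ_top (by omega)]
  ring

end HasBoundaryExpansion

theorem hasBoundaryExpansion_id_mul {G : ℝ → ℝ} {a : ℕ → ℝ} {n : ℕ}
    (hG : (fun h ↦ G h - ∑ j ∈ Finset.range (n + 1), a j * h ^ j) =o[𝓝[>] 0] fun h ↦ h ^ n) :
    HasBoundaryExpansion (fun h ↦ h * G h) (n + 1) := by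
  refine ⟨fun i ↦ a (i - 1), ((isBigO_refl (fun h : ℝ ↦ h) _).mul_isLittleO hG).congr ?_ ?_⟩
  · intro h
    rw [← Finset.Ico_add_one_right_eq_Icc, Finset.sum_Ico_eq_sum_range, mul_sub, Finset.mul_sum]
    refine congrArg (h * G h - ·) (Finset.sum_congr (by simp) fun j _ ↦ ?_)
    simp only [add_tsub_cancel_left]
    ring
  · intro h
    ring

theorem integral_one_sub_eq_mul_integral_comp_one_sub_mul (g : ℝ → ℝ) (h : ℝ) :
    ∫ x in (1 - h)..1, g x = h * ∫ y in (0 : ℝ)..1, g (1 - h * y) := by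
  rw [← smul_eq_mul, intervalIntegral.smul_integral_comp_sub_mul]
  simp

theorem integral_sum_mul_pow_mul {Q : ℝ → ℝ} (hQ : IntervalIntegrable Q volume 0 1)
    (s : Finset ℕ) (c : ℕ → ℝ) (h : ℝ) :
    ∫ y in (0 : ℝ)..1, (∑ j ∈ s, c j * (h * y) ^ j) * Q y
      = ∑ j ∈ s, (c j * ∫ y in (0 : ℝ)..1, y ^ j * Q y) * h ^ j := by
  have hterm : ∀ j ∈ s, IntervalIntegrable (fun y ↦ c j * h ^ j * (y ^ j * Q y)) volume 0 1 :=
    fun j _ ↦ (hQ.continuousOn_mul (continuous_pow j).continuousOn).const_mul _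
  calc ∫ y in (0 : ℝ)..1, (∑ j ∈ s, c j * (h * y) ^ j) * Q y
      = ∫ y in (0 : ℝ)..1, ∑ j ∈ s, c j * h ^ j * (y ^ j * Q y) := by
        congr 1 with y
        rw [Finset.sum_mul]
        exact Finset.sum_congr rfl fun j _ ↦ by ring
    _ = ∑ j ∈ s, (c j * ∫ y in (0 : ℝ)..1, y ^ j * Q y) * h ^ j := by
        rw [intervalIntegral.integral_finsetSum hterm]
        simp only [intervalIntegral.integral_const_mul]
        exact Finset.sum_congr rfl fun j _ ↦ by ring

theorem isLittleO_integral_comp_mul {f Q : ℝ → ℝ} {n : ℕ} {C : ℝ}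
    (hf : f =o[𝓝[≥] 0] fun s ↦ s ^ n) (hQ : ∀ y ∈ Icc (0 : ℝ) 1, ‖Q y‖ ≤ C) :
    (fun h ↦ ∫ y in (0 : ℝ)..1, f (h * y) * Q y) =o[𝓝[>] 0] fun h ↦ h ^ n := by
  have hC : 0 ≤ C := (norm_nonneg _).trans (hQ 0 ⟨le_rfl, zero_le_one⟩)
  rw [isLittleO_iff]
  intro ε hε
  obtain ⟨δ, hδ, hfδ⟩ :=
    mem_nhdsGE_iff_exists_Ico_subset.1 (hf.def (c := ε / (C + 1)) (by positivity))
  filter_upwards [Ioo_mem_nhdsGT (lt_min hδ one_pos)] with h ⟨h0, hlt⟩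
  have hbound : ∀ y ∈ uIoc (0 : ℝ) 1, ‖f (h * y) * Q y‖ ≤ ε / (C + 1) * h ^ n * C := by
    intro y hy
    obtain ⟨hy0, hy1⟩ : 0 < y ∧ y ≤ 1 := by rwa [uIoc_of_le zero_le_one] at hy
    have hhy : h * y ≤ h := mul_le_of_le_one_right h0.le hy1
    have hf' : ‖f (h * y)‖ ≤ ε / (C + 1) * (h * y) ^ n := by
      simpa [abs_of_nonneg (by positivity : 0 ≤ h * y)] using
        hfδ ⟨by positivity, hhy.trans_lt (hlt.trans_le (min_le_left _ _))⟩
    rw [norm_mul]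
    exact mul_le_mul (hf'.trans (by gcongr)) (hQ y ⟨hy0.le, hy1⟩) (norm_nonneg _) (by positivity)
  have hεC : ε / (C + 1) * C ≤ ε := by
    rw [div_mul_eq_mul_div, div_le_iff₀ (by positivity)]
    nlinarith
  calc ‖∫ y in (0 : ℝ)..1, f (h * y) * Q y‖ ≤ ε / (C + 1) * h ^ n * C * |1 - 0| :=
        intervalIntegral.norm_integral_le_of_norm_le_const hbound
    _ ≤ ε * ‖h ^ n‖ := by
        rw [norm_pow, Real.norm_eq_abs, abs_of_pos h0, sub_zero, abs_one, mul_one,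
          mul_right_comm]
        gcongr

theorem taylor_isLittleO_nhdsGE_zero {R : ℝ → ℝ} {n : ℕ} (hR : ContDiffOn ℝ n R (Icc 0 1)) :
    (fun s ↦ R s - ∑ j ∈ Finset.range (n + 1),
        iteratedDerivWithin j R (Icc 0 1) 0 / j.factorial * s ^ j) =o[𝓝[≥] 0]
      fun s ↦ s ^ n := by
  have := taylor_isLittleO (convex_Icc 0 1) ⟨le_rfl, zero_le_one⟩ hR
  rw [nhdsWithin_Icc_eq_nhdsGE zero_lt_one] at this
  refine this.congr (fun s ↦ ?_) (fun s ↦ by rw [sub_zero])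
  rw [taylor_within_apply]
  exact congrArg (R s - ·) (Finset.sum_congr rfl fun j _ ↦ by rw [sub_zero, smul_eq_mul]; ring)

theorem hasBoundaryExpansion_integral_mul_comp {P Q : ℝ → ℝ} {n : ℕ}
    (hP : ContDiffOn ℝ n P (Icc 0 1)) (hQ : ContinuousOn Q (Icc 0 1)) :
    HasBoundaryExpansion (fun h ↦ ∫ x in (1 - h)..1, P x * Q ((1 - x) / h)) n := by
  set R : ℝ → ℝ := fun s ↦ P (1 - s)
  have hR : ContDiffOn ℝ n R (Icc 0 1) :=
    hP.comp (contDiff_const.sub contDiff_id).contDiffOn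
      fun s hs ↦ ⟨by linarith [hs.2], by linarith [hs.1]⟩
  set c : ℕ → ℝ := fun j ↦ iteratedDerivWithin j R (Icc 0 1) 0 / j.factorial
  obtain ⟨C, hC⟩ := isCompact_Icc.exists_bound_of_continuousOn hQ
  have hQint : IntervalIntegrable Q volume 0 1 := (hQ.mono (by simp)).intervalIntegrable
  have hsplit : ∀ h ∈ Ioc (0 : ℝ) 1,
      ∫ y in (0 : ℝ)..1, (R (h * y) - ∑ j ∈ Finset.range (n + 1), c j * (h * y) ^ j) * Q y
        = (∫ y in (0 : ℝ)..1, R (h * y) * Q y)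
          - ∑ j ∈ Finset.range (n + 1), (c j * ∫ y in (0 : ℝ)..1, y ^ j * Q y) * h ^ j := by
    intro h ⟨h0, h1⟩
    rw [← integral_sum_mul_pow_mul hQint, ← intervalIntegral.integral_sub]
    · simp only [sub_mul]
    · have hRh : ContinuousOn (fun y ↦ R (h * y)) (Icc 0 1) :=
        hR.continuousOn.comp (continuous_const_mul h).continuousOn fun y hy ↦
          ⟨by nlinarith [hy.1], by nlinarith [hy.1, hy.2]⟩
      exact hQint.continuousOn_mul (by rwa [uIcc_of_le zero_le_one])
    · exact hQint.continuousOn_mul (by fun_prop)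
  have hG : (fun h ↦ (∫ y in (0 : ℝ)..1, R (h * y) * Q y)
      - ∑ j ∈ Finset.range (n + 1), (c j * ∫ y in (0 : ℝ)..1, y ^ j * Q y) * h ^ j)
        =o[𝓝[>] 0] fun h ↦ h ^ n := by
    refine (isLittleO_integral_comp_mul (taylor_isLittleO_nhdsGE_zero hR) hC).congr' ?_ .rfl
    filter_upwards [Ioc_mem_nhdsGT zero_lt_one] with h hh using hsplit h hh
  refine (hasBoundaryExpansion_id_mul hG).of_succ.congr' ?_
  filter_upwards [self_mem_nhdsWithin] with h (h0 : 0 < h)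
  rw [integral_one_sub_eq_mul_integral_comp_one_sub_mul]
  simp [R, mul_div_cancel_left₀ _ h0.ne']

/-- The paper's `I(x, h)` with coefficients `c`: degree `M` in `(1 - x) / h` and degree `L` in
the square root. -/
noncomputable def capPoly (c : ℕ → ℕ → ℝ → ℝ) (M L : ℕ) (x h : ℝ) : ℝ :=
  ∑ m ∈ Finset.range (M + 1), ∑ ℓ ∈ Finset.range (L + 1),
    c m ℓ x * √(1 - ((1 - x) / h) ^ 2) ^ ℓ * ((1 - x) / h) ^ m

theorem hasBoundaryExpansion_integral_capPoly {c : ℕ → ℕ → ℝ → ℝ} {n : ℕ} (M L : ℕ)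
    (hc : ∀ m ℓ, ContDiffOn ℝ n (c m ℓ) (Icc 0 1)) :
    HasBoundaryExpansion (fun h ↦ ∫ x in (1 - h)..1, capPoly c M L x h) n := by
  set term : ℕ → ℕ → ℝ → ℝ → ℝ :=
    fun m ℓ h x ↦ c m ℓ x * √(1 - ((1 - x) / h) ^ 2) ^ ℓ * ((1 - x) / h) ^ m
  have hterm : ∀ m ℓ, HasBoundaryExpansion (fun h ↦ ∫ x in (1 - h)..1, term m ℓ h x) n := by
    intro m ℓ
    simp_rw [term, mul_assoc]
    exact hasBoundaryExpansion_integral_mul_comp (Q := fun y ↦ √(1 - y ^ 2) ^ ℓ * y ^ m)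
      (hc m ℓ) (by fun_prop)
  refine (HasBoundaryExpansion.sum (s := Finset.range (M + 1)) fun m _ ↦
    HasBoundaryExpansion.sum (s := Finset.range (L + 1)) fun ℓ _ ↦ hterm m ℓ).congr' ?_
  filter_upwards [Ioc_mem_nhdsGT zero_lt_one] with h ⟨h0, h1⟩
  have hint : ∀ m ℓ, IntervalIntegrable (term m ℓ h) volume (1 - h) 1 := by
    intro m ℓ
    refine ContinuousOn.intervalIntegrable ?_
    rw [uIcc_of_le (by linarith)]
    exact (((hc m ℓ).continuousOn.mono (Icc_subset_Icc (by linarith) le_rfl)).mul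
      (by fun_prop)).mul (by fun_prop)
  change _ = ∫ x in (1 - h)..1, ∑ m ∈ Finset.range (M + 1), ∑ ℓ ∈ Finset.range (L + 1), term m ℓ h x
  rw [intervalIntegral.integral_finsetSum fun m _ ↦ ?_]
  · exact Finset.sum_congr rfl fun m _ ↦
      (intervalIntegral.integral_finsetSum fun ℓ _ ↦ hint m ℓ).symm
  · simpa only [Finset.sum_fn] using IntervalIntegrable.sum _ fun ℓ _ ↦ hint m ℓ

theorem boundary_cap_power_expansion_general (d q t r : ℕ)
    (p : ℕ → ℕ → ℝ → ℝ)
    (hp : ∀ m ℓ, ContDiffOn ℝ (r - q : ℕ) (p m ℓ) (Set.Icc (0:ℝ) 1)) :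
    (∃ p' : ℕ → ℕ → ℝ → ℝ,
        (∀ m ℓ, ContDiffOn ℝ (r - q : ℕ) (p' m ℓ) (Set.Icc (0:ℝ) 1))
        ∧ ∀ h ∈ Set.Ioc (0:ℝ) 1, ∀ x ∈ Set.Icc (1 - h) 1,
            (∑ m ∈ Finset.range (q + 1), ∑ ℓ ∈ Finset.range (d + q + 1),
                p m ℓ x * (Real.sqrt (1 - ((1 - x) / h) ^ 2)) ^ ℓ * ((1 - x) / h) ^ m) ^ t
              = ∑ m ∈ Finset.range (q * t + 1), ∑ ℓ ∈ Finset.range ((d + q) * t + 1),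
                  p' m ℓ x * (Real.sqrt (1 - ((1 - x) / h) ^ 2)) ^ ℓ * ((1 - x) / h) ^ m)
    ∧ (∃ e : ℕ → ℝ,
        (fun h : ℝ =>
            (∫ x in (1 - h)..1,
              (∑ m ∈ Finset.range (q + 1), ∑ ℓ ∈ Finset.range (d + q + 1),
                  p m ℓ x * (Real.sqrt (1 - ((1 - x) / h) ^ 2)) ^ ℓ * ((1 - x) / h) ^ m) ^ t)
            - ∑ i ∈ Finset.Icc 1 (r - q), e i * h ^ i)
          =o[nhdsWithin 0 (Set.Ioi 0)] fun h : ℝ => h ^ (r - q)) := by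
  let p' : ℕ → ℕ → ℝ → ℝ := fun m ℓ x ↦ powCoeff (fun m ℓ ↦ p m ℓ x) q (d + q) t m ℓ
  have hp' : ∀ m ℓ, ContDiffOn ℝ (r - q : ℕ) (p' m ℓ) (Icc 0 1) :=
    contDiffOn_powCoeff hp q (d + q) t
  have hpow : ∀ x h, capPoly p q (d + q) x h ^ t = capPoly p' (q * t) ((d + q) * t) x h :=
    fun x h ↦ bivariate_sum_pow_eq_sum_powCoeff _ _ _ _ _ _
  refine ⟨⟨p', hp', fun h _ x _ ↦ hpow x h⟩, ?_⟩
  show HasBoundaryExpansion (fun h ↦ ∫ x in (1 - h)..1, capPoly p q (d + q) x h ^ t) (r - q)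
  simp only [hpow]
  exact hasBoundaryExpansion_integral_capPoly (q * t) ((d + q) * t) hp'

theorem boundary_cap_power_expansion (d q t r : ℕ) (hd : Odd d) (hq : 1 ≤ q) (ht : 1 ≤ t)
    (hqr : q ≤ r)
    (p : ℕ → ℕ → ℝ → ℝ)
    (hp : ∀ m ℓ, ContDiffOn ℝ (r - q : ℕ) (p m ℓ) (Set.Icc (0:ℝ) 1)) :
    (∃ p' : ℕ → ℕ → ℝ → ℝ,
        (∀ m ℓ, ContDiffOn ℝ (r - q : ℕ) (p' m ℓ) (Set.Icc (0:ℝ) 1))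
        ∧ ∀ h ∈ Set.Ioc (0:ℝ) 1, ∀ x ∈ Set.Icc (1 - h) 1,
            (∑ m ∈ Finset.range (q + 1), ∑ ℓ ∈ Finset.range (d + q + 1),
                p m ℓ x * (Real.sqrt (1 - ((1 - x) / h) ^ 2)) ^ ℓ * ((1 - x) / h) ^ m) ^ t
              = ∑ m ∈ Finset.range (q * t + 1), ∑ ℓ ∈ Finset.range ((d + q) * t + 1),
                  p' m ℓ x * (Real.sqrt (1 - ((1 - x) / h) ^ 2)) ^ ℓ * ((1 - x) / h) ^ m)
    ∧ (∃ e : ℕ → ℝ,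
        (fun h : ℝ =>
            (∫ x in (1 - h)..1,
              (∑ m ∈ Finset.range (q + 1), ∑ ℓ ∈ Finset.range (d + q + 1),
                  p m ℓ x * (Real.sqrt (1 - ((1 - x) / h) ^ 2)) ^ ℓ * ((1 - x) / h) ^ m) ^ t)
            - ∑ i ∈ Finset.Icc 1 (r - q), e i * h ^ i)
          =o[nhdsWithin 0 (Set.Ioi 0)] fun h : ℝ => h ^ (r - q)) :=
  boundary_cap_power_expansion_general d q t r p hp
end
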